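/- Let n ≥ 2 and let ε ∈ Aut Aₙ have order 3. Then ε ∈ W(Aₙ), and rank Aₙ^ε = n − 2c for some integer c with 1 ≤ c ≤ (n+1)/3. Moreover, if ε₁, ε₂ ∈ Aut Aₙ both have order 3 and rank Aₙ^{ε₁} = rank Aₙ^{ε₂}, then ε₁ and ε₂ are conjugate by an element of W(Aₙ). -/

import Mathlib

/-- The multiplicative group structure on `AddAut A` that older Mathlib provided
(`AddAut.group`): `g * h = h.trans g`, `1 = refl`, `g⁻¹ = g.symm`. -/
instance AddAut.groupMulOld {A : Type*} [Add A] : Group (AddAut A) where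
  mul g h := AddEquiv.trans h g
  one := AddEquiv.refl _
  inv := AddEquiv.symm
  mul_assoc _ _ _ := rfl
  one_mul _ := rfl
  mul_one _ := rfl
  inv_mul_cancel := AddEquiv.self_trans_symm

section Infra
variable {L : Type*} [AddCommGroup L]

/-- The subgroup of fixed points of an automorphism of an abelian group. -/
def fixedPts (f : AddAut L) : AddSubgroup L where
  carrier := {x | f x = x}
  add_mem' := by
    intro a b ha hb
    simp only [Set.mem_setOf_eq, map_add] at *
    rw [ha, hb]
  zero_mem' := by simp
  neg_mem' := by
    intro a ha
    simp only [Set.mem_setOf_eq, map_neg] at *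
    rw [ha]

/-- The isometry group of a `ℤ`-valued form: the group of all automorphisms of the
additive group preserving the form.  For a lattice `(L, B)` this is `Aut L`. -/
def IsometryGrp (B : L → L → ℤ) : Subgroup (AddAut L) where
  carrier := {f | ∀ x y, B (f x) (f y) = B x y}
  one_mem' := by intro x y; rfl
  mul_mem' := by
    intro a b ha hb x y
    have h : ∀ z, (a * b) z = a (b z) := fun z => rfl
    simp only [Set.mem_setOf_eq] at *
    rw [h, h, ha, hb]
  inv_mem' := by
    intro a ha x y
    simp only [Set.mem_setOf_eq] at *
    have h := ha (a⁻¹ x) (a⁻¹ y)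
    have h1 : a (a⁻¹ x) = x := a.apply_symm_apply x
    have h2 : a (a⁻¹ y) = y := a.apply_symm_apply y
    rw [h1, h2] at h
    exact h.symm

/-- The Weyl group of a lattice `(L, B)`: the subgroup generated by the reflections
`r_α : x ↦ x − B(x,α)•α` in the norm-2 vectors `α`. -/
def WeylGrp (B : L → L → ℤ) : Subgroup (AddAut L) :=
  Subgroup.closure {w | ∃ α : L, B α α = 2 ∧ ∀ x, w x = x - B x α • α}

/-- The root lattice of `(L, B)`: the subgroup generated by the norm-2 vectors. -/
def rootLat (B : L → L → ℤ) : AddSubgroup L :=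
  AddSubgroup.closure {α | B α α = 2}

/-- The rank of the fixed-point sublattice of an automorphism. -/
noncomputable def fixedRank (f : AddAut L) : ℕ :=
  Module.finrank ℤ ↥(fixedPts f)

end Infra

/-- An isomorphism of lattices: an isomorphism of the underlying abelian groups
(equivalently, a `ℤ`-linear isomorphism) preserving the forms. -/
def FormIso {M N : Type*} [AddCommGroup M] [AddCommGroup N]
    (BM : M → M → ℤ) (BN : N → N → ℤ) : Prop :=
  ∃ e : M ≃+ N, ∀ x y, BN (e x) (e y) = BM x y

/-- The standard dot product on `ι → ℤ`. -/
def dotF {ι : Type*} [Fintype ι] (x y : ι → ℤ) : ℤ := ∑ i, x i * y i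

/-- The root lattice `Aₙ ⊆ ℤ^{n+1}`. -/
def AnS (n : ℕ) : AddSubgroup (Fin (n + 1) → ℤ) where
  carrier := {x | ∑ i, x i = 0}
  add_mem' := by
    intro a b ha hb
    simp only [Set.mem_setOf_eq, Pi.add_apply, Finset.sum_add_distrib] at *
    rw [ha, hb]; ring
  zero_mem' := by simp
  neg_mem' := by
    intro a ha
    simp only [Set.mem_setOf_eq, Pi.neg_apply, Finset.sum_neg_distrib] at *
    rw [ha]; ring

/-- The root lattice `Dₙ ⊆ ℤⁿ`. -/
def DnS (n : ℕ) : AddSubgroup (Fin n → ℤ) where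
  carrier := {x | (2 : ℤ) ∣ ∑ i, x i}
  add_mem' := by
    intro a b ha hb
    simp only [Set.mem_setOf_eq, Pi.add_apply, Finset.sum_add_distrib] at *
    exact dvd_add ha hb
  zero_mem' := by simp
  neg_mem' := by
    intro a ha
    simp only [Set.mem_setOf_eq, Pi.neg_apply, Finset.sum_neg_distrib] at *
    exact ha.neg_right

/-- The inner product on a root lattice, restricted from the ambient dot product. -/
def rootF {n : ℕ} (S : AddSubgroup (Fin n → ℤ)) (x y : ↥S) : ℤ := dotF x.val y.val

/-!
An isometry of `Aₙ` (`n ≥ 2`) maps roots `eᵢ - eⱼ` to roots; the images of the roots `eⱼ - e₀`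
(`j ≠ 0`) have pairwise inner product `1`, so they all share the same first or the same second
index, which makes the isometry `±` a coordinate permutation. The sign `-` cannot occur in order 3,
and coordinate permutations lie in `W(Aₙ)` because transpositions act as reflections. If `σ` has
order 3 and `c` three-cycles, the `σ`-invariant vectors of `Aₙ` are the functions on the
`⟨σ⟩`-orbits whose pullback to the coordinates sums to zero, a lattice of rank `#orbits - 1`, and
Burnside's lemma gives `#orbits = n + 1 - 2c`.
Finally, conjugacy in `S_{n+1}` is decided by the cycle type, i.e. by `c`.
-/

namespace Equiv.Perm

lemma apply_zpow_apply_of_invariant {α β : Type*} {σ : Perm α} {x : α → β}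
    (h : ∀ i, x (σ i) = x i) (k : ℤ) (i : α) : x ((σ ^ k) i) = x i := by
  induction k using Int.induction_on generalizing i with
  | zero => rfl
  | succ k ih => rw [zpow_add_one, mul_apply, ih, h]
  | pred k ih => rw [zpow_sub_one, mul_apply, ih, ← h]; simp

abbrev Orbits {α : Type*} (σ : Perm α) := MulAction.orbitRel.Quotient (Subgroup.zpowers σ) α

lemma card_orbits_mul_three {α : Type*} [Fintype α] [DecidableEq α] {σ : Perm α}
    (h3 : orderOf σ = 3) :
    Nat.card σ.Orbits * 3 = Fintype.card α + 2 * Fintype.card (Function.fixedPoints σ) := by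
  classical
  have := Fintype.ofFinite σ.Orbits
  let F : Perm α → ℕ := fun g => Fintype.card (Function.fixedPoints g)
  have hburnside : ∑ g : Subgroup.zpowers σ, F g = Nat.card σ.Orbits * 3 := by
    rw [← h3, ← Fintype.card_zpowers, Nat.card_eq_fintype_card,
      ← MulAction.sum_card_fixedBy_eq_card_orbits_mul_card_group]
    exact Fintype.sum_congr _ _ fun g => Fintype.card_congr (Equiv.refl _)
  have h1 : F 1 = Fintype.card α := Fintype.card_congr (Equiv.subtypeUnivEquiv fun _ => rfl)
  have h2 : σ ^ 2 = σ⁻¹ := by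
    rw [eq_inv_iff_mul_eq_one, ← pow_succ, ← pow_orderOf_eq_one σ, h3]
  have hinv : F σ⁻¹ = F σ := Fintype.card_congr (Equiv.subtypeEquivRight fun x => by
    simp [Function.IsFixedPt, eq_comm])
  have hfin : IsOfFinOrder σ := by rw [← orderOf_pos_iff, h3]; norm_num
  rw [← hburnside, ← (finEquivZPowers hfin).sum_comp]
  simp only [finEquivZPowers_apply]
  rw [Fin.sum_univ_eq_sum_range (fun k => F (σ ^ k)), h3]
  simp only [Finset.sum_range_succ, Finset.sum_range_zero, pow_zero, pow_one, h2, hinv, h1]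
  ring

end Equiv.Perm

lemma LinearMap.finrank_ker_add_one_of_ne_zero {ι : Type*} [Fintype ι] {φ : (ι → ℤ) →ₗ[ℤ] ℤ}
    (hφ : φ ≠ 0) : Module.finrank ℤ (LinearMap.ker φ) + 1 = Fintype.card ι := by
  have hrange : Module.finrank ℤ (LinearMap.range φ) = 1 := by
    refine le_antisymm ((Submodule.finrank_le _).trans (by simp)) ?_
    rw [Nat.one_le_iff_ne_zero, Ne, Submodule.finrank_eq_zero, LinearMap.range_eq_bot]
    exact hφ
  rw [← hrange, add_comm, ← (LinearMap.quotKerEquivRange φ).finrank_eq,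
    Submodule.finrank_quotient_add_finrank, Module.finrank_pi]

lemma exists_pos_and_exists_neg_of_sum_eq_zero {ι : Type*} [Fintype ι] {v : ι → ℤ}
    (hsum : ∑ i, v i = 0) (hv : v ≠ 0) : (∃ i, 0 < v i) ∧ ∃ j, v j < 0 := by
  constructor <;> by_contra! h <;> refine hv (funext fun i => ?_)
  · exact (Finset.sum_eq_zero_iff_of_nonpos fun i _ => h i).1 hsum i (Finset.mem_univ i)
  · exact (Finset.sum_eq_zero_iff_of_nonneg fun i _ => h i).1 hsum i (Finset.mem_univ i)

lemma forall_eq_or_forall_eq_of_pairwise {J β : Type*} {a b : J → β}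
    (h : ∀ j k, j ≠ k → (a j = a k ∧ b j ≠ b k) ∨ (b j = b k ∧ a j ≠ a k))
    {j₁ j₂ : J} (h₁₂ : j₁ ≠ j₂) : (∀ j, a j = a j₁) ∨ ∀ j, b j = b j₁ := by
  have key {a b : J → β} (h : ∀ j k, j ≠ k → (a j = a k ∧ b j ≠ b k) ∨ (b j = b k ∧ a j ≠ a k))
      (ha : a j₁ = a j₂) (j : J) : a j = a j₁ := by
    by_cases h1 : j = j₁; · rw [h1]
    by_cases h2 : j = j₂; · rw [h2, ha]
    have := h j j₁ h1; have := h j j₂ h2; have := h j₁ j₂ h₁₂; grind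
  rcases h j₁ j₂ h₁₂ with ⟨ha, -⟩ | ⟨hb, -⟩
  · exact Or.inl (key h ha)
  · exact Or.inr (key (fun j k hjk => (h j k hjk).symm) hb)

namespace RootLatticeA

open Equiv Matrix

variable {n : ℕ}

lemma mem_AnS {x : Fin (n + 1) → ℤ} : x ∈ AnS n ↔ ∑ i, x i = 0 := Iff.rfl

lemma rootF_apply (x y : AnS n) : rootF (AnS n) x y = (x : Fin (n + 1) → ℤ) ⬝ᵥ y := rfl

def permAut : Perm (Fin (n + 1)) →* AddAut (AnS n) where
  toFun σ :=
    { toFun x := ⟨fun i => x.1 (σ⁻¹ i), by rw [mem_AnS, ← x.2]; exact sum_comp σ⁻¹ x.1⟩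
      invFun x := ⟨fun i => x.1 (σ i), by rw [mem_AnS, ← x.2]; exact sum_comp σ x.1⟩
      left_inv x := by ext; simp
      right_inv x := by ext; simp
      map_add' _ _ := rfl }
  map_one' := rfl
  map_mul' _ _ := rfl

@[simp] lemma permAut_apply (σ : Perm (Fin (n + 1))) (x : AnS n) (i : Fin (n + 1)) :
    (permAut σ x : Fin (n + 1) → ℤ) i = x.1 (σ⁻¹ i) := rfl

def root (i j : Fin (n + 1)) : AnS n :=
  ⟨Pi.single i 1 - Pi.single j 1, by simp [mem_AnS, Finset.sum_sub_distrib]⟩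

@[simp] lemma coe_root (i j : Fin (n + 1)) :
    (root i j : Fin (n + 1) → ℤ) = Pi.single i 1 - Pi.single j 1 := rfl

@[simp] lemma root_self (i : Fin (n + 1)) : root i i = 0 := by ext; simp

lemma neg_root (i j : Fin (n + 1)) : -root i j = root j i := by ext; simp

lemma rootF_root (x : AnS n) (i j : Fin (n + 1)) :
    rootF (AnS n) x (root i j) = x.1 i - x.1 j := by
  simp [rootF_apply, dotProduct_sub]

lemma rootF_root_self {i j : Fin (n + 1)} (hij : i ≠ j) :
    rootF (AnS n) (root i j) (root i j) = 2 := by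
  simp [rootF_root, hij, hij.symm]

lemma permAut_root (σ : Perm (Fin (n + 1))) (i j : Fin (n + 1)) :
    permAut σ (root i j) = root (σ i) (σ j) := by
  ext k
  simp [Pi.single_apply, symm_apply_eq]

lemma eq_of_root_eq {a b c d : Fin (n + 1)} (hab : a ≠ b) (h : root a b = root c d) :
    a = c := by
  have := congrArg (fun x : AnS n => x.1 a) h
  by_contra hac
  simp [Pi.single_apply, hab, hac] at this
  split_ifs at this; omega

lemma eq_sum_smul_root (x : AnS n) : x = ∑ j, x.1 j • root j 0 := by
  ext k
  have hx : ∑ j, x.1 j = 0 := x.2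
  simp [Finset.sum_apply, Pi.single_apply, mul_sub, Finset.sum_sub_distrib, hx]

lemma addMonoidHom_ext_root {M : Type*} [AddCommGroup M] {f g : AnS n →+ M}
    (h : ∀ j, f (root j 0) = g (root j 0)) : f = g := by
  ext x
  rw [eq_sum_smul_root x, map_sum, map_sum]
  simp only [map_zsmul, h]

lemma exists_eq_root_of_rootF_self {v : AnS n} (hv : rootF (AnS n) v v = 2) :
    ∃ i j, i ≠ j ∧ v = root i j := by
  have hv0 : (v : Fin (n + 1) → ℤ) ≠ 0 := fun h => by simp [rootF_apply, h] at hv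
  obtain ⟨⟨i, hi⟩, ⟨j, hj⟩⟩ := exists_pos_and_exists_neg_of_sum_eq_zero v.2 hv0
  have hij : i ≠ j := by rintro rfl; omega
  refine ⟨i, j, hij, ?_⟩
  -- `‖v - root i j‖² = 4 - 2 (v i - v j) ≤ 0`
  have hdist : rootF (AnS n) (v - root i j) (v - root i j) ≤ 0 := by
    have h2 := rootF_root_self hij
    have h1 := rootF_root v i j
    simp only [rootF_apply, AddSubgroup.coe_sub, sub_dotProduct, dotProduct_sub,
      dotProduct_comm (root i j : Fin (n + 1) → ℤ)] at *
    linarith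
  have : (v - root i j : Fin (n + 1) → ℤ) ⬝ᵥ (v - root i j : Fin (n + 1) → ℤ) = 0 :=
    le_antisymm hdist (Fintype.sum_nonneg fun k => mul_self_nonneg _)
  exact Subtype.ext (sub_eq_zero.1 (dotProduct_self_eq_zero.1 this))

lemma rootF_root_root_eq_one {a b c d : Fin (n + 1)}
    (h : rootF (AnS n) (root a b) (root c d) = 1) : (a = c ∧ b ≠ d) ∨ (b = d ∧ a ≠ c) := by
  simp only [rootF_root, coe_root, Pi.sub_apply, Pi.single_apply] at h
  split_ifs at h <;> grind

lemma exists_eq_permAut_of_apply_root {f : AnS n →+ AnS n} (hf : Function.Injective f)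
    (s : Fin (n + 1) → Fin (n + 1)) (hs : ∀ j, f (root j 0) = root (s j) (s 0)) :
    ∃ σ : Perm (Fin (n + 1)), ∀ x, f x = permAut σ x := by
  have hinj : Function.Injective s := by
    intro j k hjk
    have h : root j 0 = root k 0 := hf (by rw [hs, hs, hjk])
    by_cases hj : j = 0
    · by_cases hk : k = 0
      · rw [hj, hk]
      · exact (eq_of_root_eq hk h.symm).symm
    · exact eq_of_root_eq hj h
  let σ := ofBijective s hinj.bijective_of_finite
  have hfσ : f = (permAut σ).toAddMonoidHom :=
    addMonoidHom_ext_root fun j => (hs j).trans (permAut_root σ j 0).symm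
  exact ⟨σ, fun x => DFunLike.congr_fun hfσ x⟩

theorem exists_eq_permAut_or_eq_neg_permAut (hn : 2 ≤ n) {f : AddAut (AnS n)}
    (hf : f ∈ IsometryGrp (rootF (AnS n))) :
    ∃ σ : Perm (Fin (n + 1)), (∀ x, f x = permAut σ x) ∨ ∀ x, f x = -permAut σ x := by
  have hroot (j : {j : Fin (n + 1) // j ≠ 0}) :
      ∃ p : Fin (n + 1) × Fin (n + 1), p.1 ≠ p.2 ∧ f (root j 0) = root p.1 p.2 := by
    obtain ⟨a, b, hab, h⟩ := exists_eq_root_of_rootF_self (v := f (root j 0))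
      (by rw [hf, rootF_root_self j.2])
    exact ⟨(a, b), hab, h⟩
  choose p hp using hroot
  have hpair (j k : {j : Fin (n + 1) // j ≠ 0}) (hjk : j ≠ k) :
      ((p j).1 = (p k).1 ∧ (p j).2 ≠ (p k).2) ∨ ((p j).2 = (p k).2 ∧ (p j).1 ≠ (p k).1) := by
    refine rootF_root_root_eq_one ?_
    rw [← (hp j).2, ← (hp k).2, hf, rootF_root]
    simp [k.2, j.2, Subtype.coe_ne_coe.2 hjk]
  let j₁ : {j : Fin (n + 1) // j ≠ 0} := ⟨⟨1, by omega⟩, by simp [Fin.ext_iff]⟩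
  let j₂ : {j : Fin (n + 1) // j ≠ 0} := ⟨⟨2, by omega⟩, by simp [Fin.ext_iff]⟩
  rcases forall_eq_or_forall_eq_of_pairwise hpair (j₁ := j₁) (j₂ := j₂) (by simp [j₁, j₂])
    with hhead | htail
  · obtain ⟨σ, hσ⟩ := exists_eq_permAut_of_apply_root (f := -f.toAddMonoidHom)
      (neg_injective.comp f.injective)
      (fun j => if hj : j = 0 then (p j₁).1 else (p ⟨j, hj⟩).2) fun j => by
        by_cases hj : j = 0
        · simp [hj]
        · simp [hj, (hp ⟨j, hj⟩).2, neg_root, ← hhead ⟨j, hj⟩]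
    exact ⟨σ, Or.inr fun x => by rw [← hσ x]; simp⟩
  · obtain ⟨σ, hσ⟩ := exists_eq_permAut_of_apply_root (f := f.toAddMonoidHom) f.injective
      (fun j => if hj : j = 0 then (p j₁).2 else (p ⟨j, hj⟩).1) fun j => by
        by_cases hj : j = 0
        · simp [hj]
        · simp [hj, (hp ⟨j, hj⟩).2, ← htail ⟨j, hj⟩]
    exact ⟨σ, Or.inl hσ⟩

lemma permAut_injective (hn : 1 ≤ n) : Function.Injective (permAut (n := n)) := by
  refine (injective_iff_map_eq_one _).2 fun σ hσ => Equiv.ext fun i => ?_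
  obtain ⟨j, hji⟩ : ∃ j : Fin (n + 1), j ≠ i :=
    ⟨if i = 0 then ⟨1, by omega⟩ else 0, by split_ifs with h <;> simp [h, Fin.ext_iff, eq_comm]⟩
  have h : root (σ i) (σ j) = root i j := by rw [← permAut_root, hσ]; rfl
  exact eq_of_root_eq (σ.injective.ne hji.symm) h

lemma permAut_ne_neg (hn : 2 ≤ n) (τ : Perm (Fin (n + 1))) : ¬∀ x, permAut τ x = -x := by
  intro hτ
  -- `x = 2e₀ - e₁ - e₂` has a coordinate `2` but no coordinate below `-1`
  let x : AnS n := root 0 ⟨1, by omega⟩ + root 0 ⟨2, by omega⟩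
  have hx (k : Fin (n + 1)) : -1 ≤ x.1 k := by
    simp only [x, AddSubgroup.coe_add, coe_root, Pi.add_apply, Pi.sub_apply, Pi.single_apply,
      Fin.ext_iff]
    split_ifs <;> omega
  have hx0 : x.1 0 = 2 := by simp [x, Fin.ext_iff]
  have h := congrArg (fun y : AnS n => y.1 (τ 0)) (hτ x)
  simp only [permAut_apply, Perm.coe_inv, symm_apply_apply, AddSubgroup.coe_neg,
    Pi.neg_apply] at h
  linarith [hx (τ 0)]

theorem exists_orderOf_eq_three_eq_permAut (hn : 2 ≤ n) {f : AddAut (AnS n)}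
    (hf : f ∈ IsometryGrp (rootF (AnS n))) (hf3 : orderOf f = 3) :
    ∃ σ : Perm (Fin (n + 1)), orderOf σ = 3 ∧ f = permAut σ := by
  obtain ⟨σ, hσ | hσ⟩ := exists_eq_permAut_or_eq_neg_permAut hn hf
  · have hfσ : f = permAut σ := AddEquiv.ext hσ
    refine ⟨σ, ?_, hfσ⟩
    rw [← hf3, hfσ, orderOf_injective _ (permAut_injective (by omega))]
  · refine absurd (fun x => ?_) (permAut_ne_neg hn (σ ^ 3))
    have h := DFunLike.congr_fun (pow_orderOf_eq_one f) (-x)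
    rw [hf3] at h
    change f (f (f (-x))) = -x at h
    rw [map_pow, pow_three]
    exact (by simpa [hσ] using h : permAut σ (permAut σ (permAut σ x)) = -x)

lemma permAut_swap_apply {i j : Fin (n + 1)} (x : AnS n) :
    permAut (swap i j) x = x - rootF (AnS n) x (root i j) • root i j := by
  ext k
  simp only [permAut_apply, swap_inv, rootF_root, AddSubgroup.coe_sub, AddSubgroup.coe_zsmul,
    coe_root, Pi.sub_apply, Pi.smul_apply, Pi.single_apply, smul_eq_mul]
  rcases eq_or_ne k i with rfl | hki
  · by_cases hkj : k = j <;> simp [hkj]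
  · rcases eq_or_ne k j with rfl | hkj
    · simp [hki]
    · simp [hki, hkj, swap_apply_of_ne_of_ne hki hkj]

lemma permAut_mem_weylGrp (σ : Perm (Fin (n + 1))) : permAut σ ∈ WeylGrp (rootF (AnS n)) := by
  have h : Subgroup.closure {τ | τ.IsSwap} ≤ (WeylGrp (rootF (AnS n))).comap permAut :=
    (Subgroup.closure_le _).2 fun _ ⟨i, j, hij, hτ⟩ =>
      Subgroup.subset_closure ⟨root i j, rootF_root_self hij, hτ ▸ permAut_swap_apply⟩
  exact h (by rw [Perm.closure_isSwap]; trivial)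

lemma mem_fixedPts_permAut {σ : Perm (Fin (n + 1))} {x : AnS n} :
    x ∈ fixedPts (permAut σ) ↔ ∀ i, x.1 (σ i) = x.1 i := by
  change permAut σ x = x ↔ _
  refine ⟨fun h i => ?_, fun h => Subtype.ext (funext fun i => ?_)⟩
  · simpa using (congrFun (congrArg Subtype.val h) (σ i)).symm
  · simpa using (h (σ⁻¹ i)).symm

section FixedRank

variable (σ : Perm (Fin (n + 1)))

def orbitSum : (σ.Orbits → ℤ) →ₗ[ℤ] ℤ where
  toFun y := ∑ i, y ⟦i⟧
  map_add' _ _ := Finset.sum_add_distrib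
  map_smul' _ _ := by simp [Finset.mul_sum]

def fixedPtsEquivKerOrbitSum : fixedPts (permAut σ) ≃+ LinearMap.ker (orbitSum σ) where
  toFun x := ⟨Quotient.lift x.1.1 (by
      rintro i j ⟨⟨g, hg⟩, rfl⟩
      obtain ⟨k, rfl⟩ := Subgroup.mem_zpowers_iff.1 hg
      exact Perm.apply_zpow_apply_of_invariant (mem_fixedPts_permAut.1 x.2) k j), x.1.2⟩
  invFun y := ⟨⟨fun i => y.1 ⟦i⟧, y.2⟩, mem_fixedPts_permAut.2 fun i =>
      congrArg y.1 (Quotient.sound ⟨⟨σ, Subgroup.mem_zpowers σ⟩, rfl⟩)⟩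
  left_inv _ := rfl
  right_inv y := by ext q; induction q using Quotient.inductionOn; rfl
  map_add' _ _ := by ext q; induction q using Quotient.inductionOn; rfl

lemma fixedRank_permAut_add_one : fixedRank (permAut σ) + 1 = Nat.card σ.Orbits := by
  have := Fintype.ofFinite σ.Orbits
  rw [fixedRank, (fixedPtsEquivKerOrbitSum σ).toIntLinearEquiv.finrank_eq,
    LinearMap.finrank_ker_add_one_of_ne_zero, Nat.card_eq_fintype_card]
  intro h
  have h1 := LinearMap.congr_fun h fun _ => 1
  simp [orbitSum] at h1
  omega

variable {σ}

lemma fixedRank_permAut_add_two_mul {c : ℕ} (h3 : orderOf σ = 3)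
    (hc : σ.cycleType = Multiset.replicate c 3) : fixedRank (permAut σ) + 2 * c = n := by
  have horb := σ.card_orbits_mul_three h3
  have hsum := σ.sum_cycleType_le
  rw [← fixedRank_permAut_add_one, Perm.card_fixedPoints, hc] at horb
  rw [hc] at hsum
  simp only [Multiset.sum_replicate, smul_eq_mul, Fintype.card_fin] at horb hsum
  omega

end FixedRank

theorem exists_permAut_cycleType_fixedRank (hn : 2 ≤ n) {f : AddAut (AnS n)}
    (hf : f ∈ IsometryGrp (rootF (AnS n))) (hf3 : orderOf f = 3) :
    ∃ (σ : Perm (Fin (n + 1))) (c : ℕ), f = permAut σ ∧ σ.cycleType = Multiset.replicate c 3 ∧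
      1 ≤ c ∧ 3 * c ≤ n + 1 ∧ fixedRank f + 2 * c = n := by
  obtain ⟨σ, hσ3, rfl⟩ := exists_orderOf_eq_three_eq_permAut hn hf hf3
  obtain ⟨c, hc⟩ := Perm.cycleType_prime_order (hσ3 ▸ Nat.prime_three)
  rw [hσ3] at hc
  have hsum := σ.sum_cycleType_le
  simp only [hc, Multiset.sum_replicate, smul_eq_mul, Fintype.card_fin] at hsum
  exact ⟨σ, c + 1, rfl, hc, by omega, by omega, fixedRank_permAut_add_two_mul hσ3 hc⟩

end RootLatticeA

open RootLatticeA

/-- Let `n ≥ 2` and `ε ∈ Aut Aₙ` of order 3.  Then `ε ∈ W(Aₙ)` and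
`rank Aₙ^ε = n − 2c` for some `1 ≤ c ≤ (n+1)/3`; moreover any two order-3
automorphisms with the same fixed-point rank are conjugate by an element of `W(Aₙ)`. -/
theorem stmt7 (n : ℕ) (hn : 2 ≤ n)
    (ε : ↥(IsometryGrp (rootF (AnS n)))) (hord : orderOf ε = 3) :
    ((ε : AddAut ↥(AnS n)) ∈ WeylGrp (rootF (AnS n)) ∧
      ∃ c : ℕ, 1 ≤ c ∧ 3 * c ≤ n + 1 ∧
        fixedRank (ε : AddAut ↥(AnS n)) + 2 * c = n) ∧
    (∀ ε₁ ε₂ : ↥(IsometryGrp (rootF (AnS n))), orderOf ε₁ = 3 → orderOf ε₂ = 3 →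
      fixedRank (ε₁ : AddAut ↥(AnS n)) = fixedRank (ε₂ : AddAut ↥(AnS n)) →
      ∃ w ∈ WeylGrp (rootF (AnS n)),
        w⁻¹ * (ε₁ : AddAut ↥(AnS n)) * w = (ε₂ : AddAut ↥(AnS n))) := by
  obtain ⟨σ, c, hσ, -, hc1, hc3, hrank⟩ :=
    exists_permAut_cycleType_fixedRank hn ε.2 ((Subgroup.orderOf_coe ε).trans hord)
  refine ⟨⟨hσ ▸ permAut_mem_weylGrp σ, c, hc1, hc3, hrank⟩, fun ε₁ ε₂ h₁ h₂ hrank₁₂ => ?_⟩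
  obtain ⟨σ₁, c₁, hσ₁, hc₁, -, -, hrank₁⟩ :=
    exists_permAut_cycleType_fixedRank hn ε₁.2 ((Subgroup.orderOf_coe ε₁).trans h₁)
  obtain ⟨σ₂, c₂, hσ₂, hc₂, -, -, hrank₂⟩ :=
    exists_permAut_cycleType_fixedRank hn ε₂.2 ((Subgroup.orderOf_coe ε₂).trans h₂)
  have hconj : IsConj σ₁ σ₂ := Equiv.Perm.isConj_iff_cycleType_eq.2 <| by
    rw [hc₁, hc₂, show c₁ = c₂ by omega]
  obtain ⟨τ, rfl⟩ := isConj_iff.1 hconj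
  refine ⟨permAut τ⁻¹, permAut_mem_weylGrp τ⁻¹, ?_⟩
  rw [hσ₁, hσ₂, map_mul, map_mul, map_inv, inv_inv]
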